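/- One-step relation in the decoupling ansatz: suppose Y_k = T_k x_k + φ_k for all k, x_{k+1} = A_k x_k + Λ²_k π_k + b_k + (D_k x_k + Λ⁴_k π_k + σ_k) ω_k, and the backward equation Y_k = Ã_k^⊤ E[Y_{k+1}|F_{k-1}] + D̃_k^⊤ E[Y_{k+1}ω_k|F_{k-1}] + Λ⁵_k x_k + Λ⁶ᵀ_k π_k + λ¹_k holds, where x_k, π_k and all coefficients at step k are F_{k-1}-measurable, T_{k+1}, φ_{k+1} are F_k-measurable, and E[ω_k|F_{k-1}] = 0, E[ω_k²|F_{k-1}] = 1. Then almost surely T_k x_k + φ_k = Δ(T_{k+1}) x_k + L^⊤(T_{k+1}) π_k + Θ(T_{k+1}, φ_{k+1}), with Δ, L, Θ as defined via conditional expectations E[T_{k+1}|F_{k-1}], E[T_{k+1}ω_k|F_{k-1}], E[T_{k+1}ω_k²|F_{k-1}], E[φ_{k+1}|F_{k-1}], E[φ_{k+1}ω_k|F_{k-1}]. -/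

import Mathlib

/-!
Substituting the dynamics into the ansatz at step `k + 1` gives
`Y_{k+1} = T_{k+1} (u + ω v) + φ_{k+1}` with `u = A x + Λ² π + b` and `v = D x + Λ⁴ π + σ`,
both `F_{k-1}`-measurable and square integrable. Hence `u` and `v` can be pulled out of the
conditional expectations of `Y_{k+1}` and `ω Y_{k+1}`, leaving `E[T|F] u + E[Tω|F] v + E[φ|F]`
and `E[Tω|F] u + E[Tω²|F] v + E[φω|F]`; inserting these into the backward equation and expanding
gives the identity.
-/

open Matrix MeasureTheory

namespace MeasureTheory

variable {Ω ι κ : Type*} [Fintype κ] {m m0 : MeasurableSpace Ω} {μ : Measure Ω}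

lemma memLp_top_of_abs_le {f : Ω → ℝ} (hf : AEStronglyMeasurable f μ) {C : ℝ}
    (hC : ∀ ϖ, |f ϖ| ≤ C) : MemLp f ⊤ μ :=
  memLp_top_of_bound hf C (.of_forall hC)

lemma measurable_mulVec {M : Ω → Matrix ι κ ℝ} {u : Ω → κ → ℝ}
    (hM : ∀ i j, Measurable[m] fun ϖ => M ϖ i j) (hu : Measurable[m] u) :
    Measurable[m] fun ϖ => M ϖ *ᵥ u ϖ :=
  @measurable_pi_lambda _ _ _ m _ _ fun i =>
    Finset.measurable_sum _ fun j _ => (hM i j).mul (hu.eval (a := j))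

variable [Fintype ι]

lemma stronglyMeasurable_mulVec {M : Ω → Matrix ι κ ℝ} {u : Ω → κ → ℝ}
    (hM : ∀ i j, Measurable[m] fun ϖ => M ϖ i j) (hu : StronglyMeasurable[m] u) :
    StronglyMeasurable[m] fun ϖ => M ϖ *ᵥ u ϖ :=
  (measurable_mulVec hM hu.measurable).stronglyMeasurable

lemma memLp_mulVec {p q r : ENNReal} [ENNReal.HolderTriple p q r] {M : Ω → Matrix ι κ ℝ}
    {u : Ω → κ → ℝ} (hM : ∀ i j, MemLp (fun ϖ => M ϖ i j) p μ) (hu : MemLp u q μ) :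
    MemLp (fun ϖ => M ϖ *ᵥ u ϖ) r μ :=
  memLp_pi_iff.2 fun i => memLp_finsetSum _ fun j _ => (memLp_pi_iff.1 hu j).mul' (hM i j)

lemma memLp_mulVec_of_abs_le (hm : m ≤ m0) {M : Ω → Matrix ι κ ℝ} {u : Ω → κ → ℝ}
    (hM : ∀ i j, Measurable[m] fun ϖ => M ϖ i j) {C : ℝ} (hC : ∀ ϖ i j, |M ϖ i j| ≤ C)
    (hu : MemLp u 2 μ) : MemLp (fun ϖ => M ϖ *ᵥ u ϖ) 2 μ :=
  memLp_mulVec (p := ⊤) (fun i j =>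
    memLp_top_of_abs_le ((hM i j).mono hm le_rfl).aestronglyMeasurable (hC · i j)) hu

lemma condExp_apply_ae_eq {f : Ω → ι → ℝ} (hf : Integrable f μ) (i : ι) :
    (fun ϖ => μ[f|m] ϖ i) =ᵐ[μ] μ[fun ϖ => f ϖ i|m] :=
  (ContinuousLinearMap.proj i).comp_condExp_comm hf

lemma ae_eq_condExp_of_forall_apply {f g : Ω → ι → ℝ} (hf : Integrable f μ)
    (h : ∀ i, (fun ϖ => g ϖ i) =ᵐ[μ] μ[fun ϖ => f ϖ i|m]) : g =ᵐ[μ] μ[f|m] := by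
  have h' : ∀ i, ∀ᵐ ϖ ∂μ, g ϖ i = μ[f|m] ϖ i := fun i =>
    (h i).trans (condExp_apply_ae_eq hf i).symm
  filter_upwards [ae_all_iff.2 h'] with ϖ hϖ
  exact funext hϖ

variable [IsFiniteMeasure μ]

lemma condExp_mulVec_ae_eq {M E : Ω → Matrix ι κ ℝ} {u : Ω → κ → ℝ}
    (hM : ∀ i j, MemLp (fun ϖ => M ϖ i j) 2 μ) (hu : AEStronglyMeasurable[m] u μ)
    (hu2 : MemLp u 2 μ) (hE : ∀ i j, (fun ϖ => E ϖ i j) =ᵐ[μ] μ[fun ϖ => M ϖ i j|m]) :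
    μ[fun ϖ => M ϖ *ᵥ u ϖ|m] =ᵐ[μ] fun ϖ => E ϖ *ᵥ u ϖ := by
  refine (ae_eq_condExp_of_forall_apply (memLp_one_iff_integrable.1 (memLp_mulVec hM hu2))
    fun i => ?_).symm
  have hint : ∀ j, Integrable (fun ϖ => M ϖ i j * u ϖ j) μ := fun j =>
    memLp_one_iff_integrable.1 ((memLp_pi_iff.1 hu2 j).mul' (hM i j))
  have hsum := condExp_finsetSum (s := Finset.univ) (m := m) fun j _ => hint j
  have hpull : ∀ j, μ[fun ϖ => M ϖ i j * u ϖ j|m] =ᵐ[μ] fun ϖ => E ϖ i j * u ϖ j := fun j =>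
    (condExp_mul_of_aestronglyMeasurable_right
      ((continuous_apply j).comp_aestronglyMeasurable hu) (hint j)
      ((hM i j).integrable one_le_two)).trans
      (by filter_upwards [hE i j] with ϖ hϖ; simp [hϖ])
  filter_upwards [hsum, ae_all_iff.2 hpull] with ϖ hs hp
  rw [Finset.sum_fn] at hs
  simp only [mulVec, dotProduct, Finset.sum_apply] at hs ⊢
  rw [hs]
  exact Finset.sum_congr rfl fun j _ => (hp j).symm

lemma condExp_mulVec_add_mulVec_add_ae_eq {M₁ M₂ E₁ E₂ : Ω → Matrix ι κ ℝ}
    {u v : Ω → κ → ℝ} {φ : Ω → ι → ℝ}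
    (hM₁ : ∀ i j, MemLp (fun ϖ => M₁ ϖ i j) 2 μ) (hM₂ : ∀ i j, MemLp (fun ϖ => M₂ ϖ i j) 2 μ)
    (hu : AEStronglyMeasurable[m] u μ) (hu2 : MemLp u 2 μ)
    (hv : AEStronglyMeasurable[m] v μ) (hv2 : MemLp v 2 μ) (hφ : Integrable φ μ)
    (hE₁ : ∀ i j, (fun ϖ => E₁ ϖ i j) =ᵐ[μ] μ[fun ϖ => M₁ ϖ i j|m])
    (hE₂ : ∀ i j, (fun ϖ => E₂ ϖ i j) =ᵐ[μ] μ[fun ϖ => M₂ ϖ i j|m]) :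
    μ[fun ϖ => M₁ ϖ *ᵥ u ϖ + M₂ ϖ *ᵥ v ϖ + φ ϖ|m] =ᵐ[μ]
      fun ϖ => E₁ ϖ *ᵥ u ϖ + E₂ ϖ *ᵥ v ϖ + μ[φ|m] ϖ := by
  have h₁ := memLp_one_iff_integrable.1 (memLp_mulVec hM₁ hu2)
  have h₂ := memLp_one_iff_integrable.1 (memLp_mulVec hM₂ hv2)
  filter_upwards [condExp_add (h₁.add h₂) hφ m, condExp_add h₁ h₂ m,
    condExp_mulVec_ae_eq hM₁ hu hu2 hE₁, condExp_mulVec_ae_eq hM₂ hv hv2 hE₂] with ϖ e e₁₂ e₁ e₂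
  rw [Pi.add_apply, e₁₂, Pi.add_apply, e₁, e₂] at e
  exact e

section Decoupling

variable {T ET ETw ETw2 : Ω → Matrix ι κ ℝ} {ω : Ω → ℝ} {u v : Ω → κ → ℝ}
  {φ Y : Ω → ι → ℝ}

lemma condExp_ae_eq_of_decoupling (hT : ∀ i j, MemLp (fun ϖ => T ϖ i j) ⊤ μ) (hω : MemLp ω 2 μ)
    (hu : AEStronglyMeasurable[m] u μ) (hu2 : MemLp u 2 μ)
    (hv : AEStronglyMeasurable[m] v μ) (hv2 : MemLp v 2 μ) (hφ : MemLp φ 2 μ)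
    (hY : ∀ᵐ ϖ ∂μ, Y ϖ = T ϖ *ᵥ (u ϖ + ω ϖ • v ϖ) + φ ϖ)
    (hET : ∀ i j, (fun ϖ => ET ϖ i j) =ᵐ[μ] μ[fun ϖ => T ϖ i j|m])
    (hETw : ∀ i j, (fun ϖ => ETw ϖ i j) =ᵐ[μ] μ[fun ϖ => ω ϖ * T ϖ i j|m]) :
    μ[Y|m] =ᵐ[μ] fun ϖ => ET ϖ *ᵥ u ϖ + ETw ϖ *ᵥ v ϖ + μ[φ|m] ϖ := by
  have hY' : Y =ᵐ[μ] fun ϖ => T ϖ *ᵥ u ϖ + (ω ϖ • T ϖ) *ᵥ v ϖ + φ ϖ := by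
    filter_upwards [hY] with ϖ h
    rw [h, mulVec_add, mulVec_smul, smul_mulVec]
  refine (condExp_congr_ae hY').trans ?_
  exact condExp_mulVec_add_mulVec_add_ae_eq (fun i j => (hT i j).mono_exponent le_top)
    (fun i j => (hT i j).mul' hω) hu hu2 hv hv2 (hφ.integrable one_le_two) hET hETw

lemma condExp_smul_ae_eq_of_decoupling (hT : ∀ i j, MemLp (fun ϖ => T ϖ i j) ⊤ μ)
    (hω : MemLp ω 4 μ) (hu : AEStronglyMeasurable[m] u μ) (hu2 : MemLp u 2 μ)
    (hv : AEStronglyMeasurable[m] v μ) (hv2 : MemLp v 2 μ) (hφ : MemLp φ 2 μ)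
    (hY : ∀ᵐ ϖ ∂μ, Y ϖ = T ϖ *ᵥ (u ϖ + ω ϖ • v ϖ) + φ ϖ)
    (hETw : ∀ i j, (fun ϖ => ETw ϖ i j) =ᵐ[μ] μ[fun ϖ => ω ϖ * T ϖ i j|m])
    (hETw2 : ∀ i j, (fun ϖ => ETw2 ϖ i j) =ᵐ[μ] μ[fun ϖ => ω ϖ ^ 2 * T ϖ i j|m]) :
    μ[fun ϖ => ω ϖ • Y ϖ|m] =ᵐ[μ]
      fun ϖ => ETw ϖ *ᵥ u ϖ + ETw2 ϖ *ᵥ v ϖ + μ[fun ϖ => ω ϖ • φ ϖ|m] ϖ := by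
  have hω2 : MemLp ω 2 μ := hω.mono_exponent (by norm_num)
  have : ENNReal.HolderTriple 4 4 2 := ⟨by
    rw [← two_mul, show (4 : ENNReal) = 2 * 2 by norm_num, ENNReal.mul_inv (by simp) (by simp),
      ← mul_assoc, ENNReal.mul_inv_cancel (by simp) (by simp), one_mul]⟩
  have hωsq : MemLp (fun ϖ => ω ϖ ^ 2) 2 μ := by simpa only [sq] using hω.mul' hω
  have hY' : (fun ϖ => ω ϖ • Y ϖ) =ᵐ[μ]
      fun ϖ => (ω ϖ • T ϖ) *ᵥ u ϖ + (ω ϖ ^ 2 • T ϖ) *ᵥ v ϖ + ω ϖ • φ ϖ := by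
    filter_upwards [hY] with ϖ h
    simp only [h, mulVec_add, mulVec_smul, smul_mulVec]
    module
  refine (condExp_congr_ae hY').trans ?_
  exact condExp_mulVec_add_mulVec_add_ae_eq (fun i j => (hT i j).mul' hω2)
    (fun i j => (hT i j).mul' hωsq) hu hu2 hv hv2
    (memLp_one_iff_integrable.1 (hφ.smul hω2)) hETw hETw2

end Decoupling

end MeasureTheory

theorem stmt_19_general {Ω : Type*} {m0 : MeasurableSpace Ω} (μ : Measure Ω)
    [IsProbabilityMeasure μ]
    (n m l : ℕ) (G G' : MeasurableSpace Ω) (hGG' : G ≤ G') (hG' : G' ≤ m0)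
    -- noise: E[ω|F] = 0, E[ω²|F] = 1, E[ω⁴] < ∞, ω is F_k-measurable
    (ω : Ω → ℝ) (hωL4 : MemLp ω 4 μ)
    -- coefficients at step k, F_{k-1}-measurable and essentially bounded
    (tA tD : Ω → Matrix (Fin (2 * n)) (Fin (2 * n)) ℝ)
    (A Dm : Ω → Matrix (Fin n) (Fin n) ℝ)
    (Λ2 Λ4 : Ω → Matrix (Fin n) (Fin (m + l)) ℝ)
    (Λ5 : Ω → Matrix (Fin (2 * n)) (Fin n) ℝ)
    (Λ6 : Ω → Matrix (Fin (m + l)) (Fin (2 * n)) ℝ)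
    (lam1 : Ω → Fin (2 * n) → ℝ)
    (hAmeas : ∀ i j, Measurable[G] fun ϖ => A ϖ i j)
    (hDmmeas : ∀ i j, Measurable[G] fun ϖ => Dm ϖ i j)
    (hΛ2meas : ∀ i j, Measurable[G] fun ϖ => Λ2 ϖ i j)
    (hΛ4meas : ∀ i j, Measurable[G] fun ϖ => Λ4 ϖ i j)
    (hbound : ∃ C : ℝ, ∀ ϖ, (∀ i j, |tA ϖ i j| ≤ C) ∧ (∀ i j, |tD ϖ i j| ≤ C) ∧
      (∀ i j, |A ϖ i j| ≤ C) ∧ (∀ i j, |Dm ϖ i j| ≤ C) ∧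
      (∀ i j, |Λ2 ϖ i j| ≤ C) ∧ (∀ i j, |Λ4 ϖ i j| ≤ C) ∧
      (∀ i j, |Λ5 ϖ i j| ≤ C) ∧ (∀ i j, |Λ6 ϖ i j| ≤ C))
    -- state, control, inhomogeneous terms at step k (F_{k-1}-measurable, L²)
    (x : Ω → Fin n → ℝ) (π : Ω → Fin (m + l) → ℝ) (b σv : Ω → Fin n → ℝ)
    (hxmeas : StronglyMeasurable[G] x) (hxL2 : MemLp x 2 μ)
    (hπmeas : StronglyMeasurable[G] π) (hπL2 : MemLp π 2 μ)
    (hbmeas : StronglyMeasurable[G] b) (hbL2 : MemLp b 2 μ)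
    (hσmeas : StronglyMeasurable[G] σv) (hσL2 : MemLp σv 2 μ)
    -- T_k, T_{k+1}, φ_k, φ_{k+1}, Y_k, Y_{k+1}, x_{k+1}
    (Tk Tn : Ω → Matrix (Fin (2 * n)) (Fin n) ℝ)
    (hTnmeas : ∀ i j, Measurable[G'] fun ϖ => Tn ϖ i j)
    (hTnbdd : ∃ C : ℝ, ∀ ϖ i j, |Tn ϖ i j| ≤ C)
    (φk φn : Ω → Fin (2 * n) → ℝ)
    (hφnL2 : MemLp φn 2 μ)
    (Yk Yn : Ω → Fin (2 * n) → ℝ) (xn : Ω → Fin n → ℝ)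
    -- ansatz and dynamics
    (hYk : ∀ᵐ ϖ ∂μ, Yk ϖ = (Tk ϖ).mulVec (x ϖ) + φk ϖ)
    (hYn : ∀ᵐ ϖ ∂μ, Yn ϖ = (Tn ϖ).mulVec (xn ϖ) + φn ϖ)
    (hxn : ∀ᵐ ϖ ∂μ, xn ϖ =
      (A ϖ).mulVec (x ϖ) + (Λ2 ϖ).mulVec (π ϖ) + b ϖ +
        ω ϖ • ((Dm ϖ).mulVec (x ϖ) + (Λ4 ϖ).mulVec (π ϖ) + σv ϖ))
    (hback : ∀ᵐ ϖ ∂μ, Yk ϖ =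
      (tA ϖ)ᵀ.mulVec ((μ[Yn|G]) ϖ) +
        (tD ϖ)ᵀ.mulVec ((μ[fun ϖ' => ω ϖ' • Yn ϖ'|G]) ϖ) +
        (Λ5 ϖ).mulVec (x ϖ) + (Λ6 ϖ)ᵀ.mulVec (π ϖ) + lam1 ϖ)
    -- entrywise versions of the matrix conditional expectations
    (ET ETw ETw2 : Ω → Matrix (Fin (2 * n)) (Fin n) ℝ)
    (hET : ∀ i j, (fun ϖ => ET ϖ i j) =ᵐ[μ] μ[fun ϖ => Tn ϖ i j|G])
    (hETw : ∀ i j, (fun ϖ => ETw ϖ i j) =ᵐ[μ] μ[fun ϖ => ω ϖ * Tn ϖ i j|G])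
    (hETw2 : ∀ i j, (fun ϖ => ETw2 ϖ i j) =ᵐ[μ] μ[fun ϖ => (ω ϖ) ^ 2 * Tn ϖ i j|G]) :
    ∀ᵐ ϖ ∂μ,
      (Tk ϖ).mulVec (x ϖ) + φk ϖ =
        (Λ5 ϖ + (tA ϖ)ᵀ * ET ϖ * A ϖ + (tA ϖ)ᵀ * ETw ϖ * Dm ϖ +
          (tD ϖ)ᵀ * ETw ϖ * A ϖ + (tD ϖ)ᵀ * ETw2 ϖ * Dm ϖ).mulVec (x ϖ) +
        ((Λ6 ϖ)ᵀ + (tA ϖ)ᵀ * ET ϖ * Λ2 ϖ + (tA ϖ)ᵀ * ETw ϖ * Λ4 ϖ +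
          (tD ϖ)ᵀ * ETw ϖ * Λ2 ϖ + (tD ϖ)ᵀ * ETw2 ϖ * Λ4 ϖ).mulVec (π ϖ) +
        (lam1 ϖ +
          (tA ϖ)ᵀ.mulVec ((ET ϖ).mulVec (b ϖ) + (ETw ϖ).mulVec (σv ϖ) +
            (μ[φn|G]) ϖ) +
          (tD ϖ)ᵀ.mulVec ((ETw ϖ).mulVec (b ϖ) + (ETw2 ϖ).mulVec (σv ϖ) +
            (μ[fun ϖ' => ω ϖ' • φn ϖ'|G]) ϖ)) := by
  obtain ⟨C, hC⟩ := hbound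
  obtain ⟨CT, hCT⟩ := hTnbdd
  have hG : G ≤ m0 := hGG'.trans hG'
  set u : Ω → Fin n → ℝ := fun ϖ => A ϖ *ᵥ x ϖ + Λ2 ϖ *ᵥ π ϖ + b ϖ with hu_def
  set v : Ω → Fin n → ℝ := fun ϖ => Dm ϖ *ᵥ x ϖ + Λ4 ϖ *ᵥ π ϖ + σv ϖ with hv_def
  have hu : StronglyMeasurable[G] u :=
    ((stronglyMeasurable_mulVec hAmeas hxmeas).add (stronglyMeasurable_mulVec hΛ2meas hπmeas)).add
      hbmeas
  have hv : StronglyMeasurable[G] v :=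
    ((stronglyMeasurable_mulVec hDmmeas hxmeas).add
      (stronglyMeasurable_mulVec hΛ4meas hπmeas)).add hσmeas
  have hu2 : MemLp u 2 μ :=
    ((memLp_mulVec_of_abs_le hG hAmeas (fun ϖ => (hC ϖ).2.2.1) hxL2).add
      (memLp_mulVec_of_abs_le hG hΛ2meas (fun ϖ => (hC ϖ).2.2.2.2.1) hπL2)).add hbL2
  have hv2 : MemLp v 2 μ :=
    ((memLp_mulVec_of_abs_le hG hDmmeas (fun ϖ => (hC ϖ).2.2.2.1) hxL2).add
      (memLp_mulVec_of_abs_le hG hΛ4meas (fun ϖ => (hC ϖ).2.2.2.2.2.1) hπL2)).add hσL2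
  have hTn : ∀ i j, MemLp (fun ϖ => Tn ϖ i j) ⊤ μ := fun i j =>
    memLp_top_of_abs_le ((hTnmeas i j).mono hG' le_rfl).aestronglyMeasurable (hCT · i j)
  have hYn' : ∀ᵐ ϖ ∂μ, Yn ϖ = Tn ϖ *ᵥ (u ϖ + ω ϖ • v ϖ) + φn ϖ := by
    filter_upwards [hYn, hxn] with ϖ h₁ h₂
    rw [h₁, h₂]
  filter_upwards [hYk, hback,
    condExp_ae_eq_of_decoupling hTn (hωL4.mono_exponent (by norm_num)) hu.aestronglyMeasurable hu2
      hv.aestronglyMeasurable hv2 hφnL2 hYn' hET hETw,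
    condExp_smul_ae_eq_of_decoupling hTn hωL4 hu.aestronglyMeasurable hu2 hv.aestronglyMeasurable
      hv2 hφnL2 hYn' hETw hETw2] with ϖ hYkϖ hbackϖ hEYn hEωYn
  rw [← hYkϖ, hbackϖ, hEYn, hEωYn]
  simp only [hu_def, hv_def, mulVec_add, add_mulVec, mulVec_mulVec, Matrix.mul_assoc]
  abel

/-- One-step relation in the decoupling ansatz: if `Y_k = T_k x_k + φ_k`
and `Y_{k+1} = T_{k+1} x_{k+1} + φ_{k+1}`, `x_{k+1}` follows the forward dynamics, and
the backward equation holds, then almost surely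
`T_k x_k + φ_k = Δ(T_{k+1}) x_k + Lᵀ(T_{k+1}) π_k + Θ(T_{k+1}, φ_{k+1})`, where
`Δ, Lᵀ, Θ` are built from the conditional expectations `E[T_{k+1}|F]`,
`E[T_{k+1}ω|F]`, `E[T_{k+1}ω²|F]`, `E[φ_{k+1}|F]`, `E[φ_{k+1}ω|F]` (`F = F_{k-1}`);
the matrix conditional expectations are given entrywise by `ET, ETw, ETw2`. -/
theorem stmt_19 {Ω : Type*} {m0 : MeasurableSpace Ω} (μ : Measure Ω)
    [IsProbabilityMeasure μ]
    (n m l : ℕ) (G G' : MeasurableSpace Ω) (hGG' : G ≤ G') (hG' : G' ≤ m0)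
    -- noise: E[ω|F] = 0, E[ω²|F] = 1, E[ω⁴] < ∞, ω is F_k-measurable
    (ω : Ω → ℝ) (hωmeas : Measurable[G'] ω) (hωL4 : MemLp ω 4 μ)
    (hωmean : μ[ω|G] =ᵐ[μ] 0)
    (hωvar : μ[fun ϖ => (ω ϖ) ^ 2|G] =ᵐ[μ] 1)
    -- coefficients at step k, F_{k-1}-measurable and essentially bounded
    (tA tD : Ω → Matrix (Fin (2 * n)) (Fin (2 * n)) ℝ)
    (A Dm : Ω → Matrix (Fin n) (Fin n) ℝ)
    (Λ2 Λ4 : Ω → Matrix (Fin n) (Fin (m + l)) ℝ)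
    (Λ5 : Ω → Matrix (Fin (2 * n)) (Fin n) ℝ)
    (Λ6 : Ω → Matrix (Fin (m + l)) (Fin (2 * n)) ℝ)
    (lam1 : Ω → Fin (2 * n) → ℝ)
    (htAmeas : ∀ i j, Measurable[G] fun ϖ => tA ϖ i j)
    (htDmeas : ∀ i j, Measurable[G] fun ϖ => tD ϖ i j)
    (hAmeas : ∀ i j, Measurable[G] fun ϖ => A ϖ i j)
    (hDmmeas : ∀ i j, Measurable[G] fun ϖ => Dm ϖ i j)
    (hΛ2meas : ∀ i j, Measurable[G] fun ϖ => Λ2 ϖ i j)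
    (hΛ4meas : ∀ i j, Measurable[G] fun ϖ => Λ4 ϖ i j)
    (hΛ5meas : ∀ i j, Measurable[G] fun ϖ => Λ5 ϖ i j)
    (hΛ6meas : ∀ i j, Measurable[G] fun ϖ => Λ6 ϖ i j)
    (hbound : ∃ C : ℝ, ∀ ϖ, (∀ i j, |tA ϖ i j| ≤ C) ∧ (∀ i j, |tD ϖ i j| ≤ C) ∧
      (∀ i j, |A ϖ i j| ≤ C) ∧ (∀ i j, |Dm ϖ i j| ≤ C) ∧
      (∀ i j, |Λ2 ϖ i j| ≤ C) ∧ (∀ i j, |Λ4 ϖ i j| ≤ C) ∧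
      (∀ i j, |Λ5 ϖ i j| ≤ C) ∧ (∀ i j, |Λ6 ϖ i j| ≤ C))
    (hlam1meas : StronglyMeasurable[G] lam1) (hlam1L2 : MemLp lam1 2 μ)
    -- state, control, inhomogeneous terms at step k (F_{k-1}-measurable, L²)
    (x : Ω → Fin n → ℝ) (π : Ω → Fin (m + l) → ℝ) (b σv : Ω → Fin n → ℝ)
    (hxmeas : StronglyMeasurable[G] x) (hxL2 : MemLp x 2 μ)
    (hπmeas : StronglyMeasurable[G] π) (hπL2 : MemLp π 2 μ)
    (hbmeas : StronglyMeasurable[G] b) (hbL2 : MemLp b 2 μ)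
    (hσmeas : StronglyMeasurable[G] σv) (hσL2 : MemLp σv 2 μ)
    -- T_k, T_{k+1}, φ_k, φ_{k+1}, Y_k, Y_{k+1}, x_{k+1}
    (Tk Tn : Ω → Matrix (Fin (2 * n)) (Fin n) ℝ)
    (hTnmeas : ∀ i j, Measurable[G'] fun ϖ => Tn ϖ i j)
    (hTnbdd : ∃ C : ℝ, ∀ ϖ i j, |Tn ϖ i j| ≤ C)
    (φk φn : Ω → Fin (2 * n) → ℝ)
    (hφnmeas : StronglyMeasurable[G'] φn) (hφnL2 : MemLp φn 2 μ)
    (Yk Yn : Ω → Fin (2 * n) → ℝ) (xn : Ω → Fin n → ℝ)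
    -- ansatz and dynamics
    (hYk : ∀ᵐ ϖ ∂μ, Yk ϖ = (Tk ϖ).mulVec (x ϖ) + φk ϖ)
    (hYn : ∀ᵐ ϖ ∂μ, Yn ϖ = (Tn ϖ).mulVec (xn ϖ) + φn ϖ)
    (hxn : ∀ᵐ ϖ ∂μ, xn ϖ =
      (A ϖ).mulVec (x ϖ) + (Λ2 ϖ).mulVec (π ϖ) + b ϖ +
        ω ϖ • ((Dm ϖ).mulVec (x ϖ) + (Λ4 ϖ).mulVec (π ϖ) + σv ϖ))
    (hback : ∀ᵐ ϖ ∂μ, Yk ϖ =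
      (tA ϖ)ᵀ.mulVec ((μ[Yn|G]) ϖ) +
        (tD ϖ)ᵀ.mulVec ((μ[fun ϖ' => ω ϖ' • Yn ϖ'|G]) ϖ) +
        (Λ5 ϖ).mulVec (x ϖ) + (Λ6 ϖ)ᵀ.mulVec (π ϖ) + lam1 ϖ)
    -- entrywise versions of the matrix conditional expectations
    (ET ETw ETw2 : Ω → Matrix (Fin (2 * n)) (Fin n) ℝ)
    (hET : ∀ i j, (fun ϖ => ET ϖ i j) =ᵐ[μ] μ[fun ϖ => Tn ϖ i j|G])
    (hETw : ∀ i j, (fun ϖ => ETw ϖ i j) =ᵐ[μ] μ[fun ϖ => ω ϖ * Tn ϖ i j|G])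
    (hETw2 : ∀ i j, (fun ϖ => ETw2 ϖ i j) =ᵐ[μ] μ[fun ϖ => (ω ϖ) ^ 2 * Tn ϖ i j|G]) :
    ∀ᵐ ϖ ∂μ,
      (Tk ϖ).mulVec (x ϖ) + φk ϖ =
        (Λ5 ϖ + (tA ϖ)ᵀ * ET ϖ * A ϖ + (tA ϖ)ᵀ * ETw ϖ * Dm ϖ +
          (tD ϖ)ᵀ * ETw ϖ * A ϖ + (tD ϖ)ᵀ * ETw2 ϖ * Dm ϖ).mulVec (x ϖ) +
        ((Λ6 ϖ)ᵀ + (tA ϖ)ᵀ * ET ϖ * Λ2 ϖ + (tA ϖ)ᵀ * ETw ϖ * Λ4 ϖ +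
          (tD ϖ)ᵀ * ETw ϖ * Λ2 ϖ + (tD ϖ)ᵀ * ETw2 ϖ * Λ4 ϖ).mulVec (π ϖ) +
        (lam1 ϖ +
          (tA ϖ)ᵀ.mulVec ((ET ϖ).mulVec (b ϖ) + (ETw ϖ).mulVec (σv ϖ) +
            (μ[φn|G]) ϖ) +
          (tD ϖ)ᵀ.mulVec ((ETw ϖ).mulVec (b ϖ) + (ETw2 ϖ).mulVec (σv ϖ) +
            (μ[fun ϖ' => ω ϖ' • φn ϖ'|G]) ϖ)) :=
  stmt_19_general μ n m l G G' hGG' hG' ω hωL4 tA tD A Dm Λ2 Λ4 Λ5 Λ6 lam1 hAmeas hDmmeas hΛ2meas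
    hΛ4meas hbound x π b σv hxmeas hxL2 hπmeas hπL2 hbmeas hbL2 hσmeas hσL2 Tk Tn hTnmeas hTnbdd φk
    φn hφnL2 Yk Yn xn hYk hYn hxn hback ET ETw ETw2 hET hETw hETw2
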